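/- arXiv:2001.11183 — 3 statements merged into one kernel-verified Lean document; each statement's English description precedes it below -/
import Mathlib

section
/- Let g: ℝ → ℝ be a nondecreasing left-continuous function with associated Lebesgue–Stieltjes measure μ_g, and let f: [0,T] → ℝ be μ_g-integrable. Define F(t) = ∫_{[0,t)} f dμ_g for t ∈ [0,T]. Then there exists a μ_g-measurable set N ⊆ [0,T] with μ_g(N) = 0 such that for all t ∈ [0,T] \ N, the g-derivative F'_g(t) exists and equals f(t). -/
/-!
Let `genInv g y = inf {u | y < g u}`. Left continuity of `g` gives `genInv g y < c ↔ y < g c`,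
so `μ_g` on `[0, T)` is the image of Lebesgue measure on `[g 0, g T)` under `genInv g`. Hence
`F = Φ ∘ g` on `[0, T]`, where `Φ` is the Lebesgue primitive of `φ = f ∘ genInv g`.
At a jump `t` of `g` we have `genInv g = t` on `[g t, g (t+))`, which yields the jump quotient.
At a continuity point `t` the `g`-difference quotient of `F` is the ordinary difference quotient
of `Φ` at `g t`, which tends to `φ (g t) = f t` by the Lebesgue differentiation theorem unless
`g t` lies in a Lebesgue-null set of bad values (those where `Φ' ≠ φ`, the countably many
values taken on a nondegenerate interval, and `g T`). Continuity points of `g` mapped to a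
Lebesgue-null set form a `μ_g`-null set, again by the image-measure identity.
-/

open MeasureTheory Filter Set

/-- The set of discontinuity points of `g` (where `g` jumps). -/
def DSet (g : ℝ → ℝ) : Set ℝ := {t | g t < Function.rightLim g t}

/-- `F` has `g`-derivative `L` at `t` (relative to the set `A`): the usual Stieltjes
difference quotient limit at continuity points of `g`, and the jump quotient at
discontinuity points of `g`. -/
def HasDerivG {V : Type*} [NormedAddCommGroup V] [NormedSpace ℝ V]
    (g : ℝ → ℝ) (A : Set ℝ) (F : ℝ → V) (t : ℝ) (L : V) : Prop :=
  if g t < Function.rightLim g t then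
    ∃ Fp : V, Filter.Tendsto F (nhdsWithin t (A ∩ Set.Ioi t)) (nhds Fp) ∧
      L = (Function.rightLim g t - g t)⁻¹ • (Fp - F t)
  else
    Filter.Tendsto (fun s => (g s - g t)⁻¹ • (F s - F t)) (nhdsWithin t (A \ {t})) (nhds L)

open Function
open scoped Topology

-- A junk value unless `g a ≤ y < g b` for some `a`, `b` (otherwise the set may be empty or
-- unbounded below).
noncomputable def genInv (g : ℝ → ℝ) (y : ℝ) : ℝ := sInf {u | y < g u}

section GenInv

variable {g : ℝ → ℝ} {a b t y : ℝ}

theorem genInv_eq_of_forall_lt_iff (h : ∀ u, y < g u ↔ t < u) : genInv g y = t := by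
  rw [genInv, show {u | y < g u} = Ioi t from Set.ext h, csInf_Ioi]

theorem genInv_apply_of_forall_lt (hg : Monotone g) (ht : ∀ s, t < s → g t < g s) :
    genInv g (g t) = t :=
  genInv_eq_of_forall_lt_iff fun u => ⟨fun h => lt_of_not_ge fun hut => (hg hut).not_gt h, ht u⟩

theorem Monotone.countable_DSet (hg : Monotone g) : (DSet g).Countable := by
  refine Countable.mono ?_ hg.countable_not_continuousAt
  intro t (ht : g t < rightLim g t) hcont
  exact ht.ne (hg.continuousWithinAt_Ioi_iff_rightLim_eq.1 hcont.continuousWithinAt).symm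

variable (hg : Monotone g) (hlc : ∀ t, ContinuousWithinAt g (Iio t) t)
include hg hlc

theorem continuousAt_of_notMem_DSet (ht : t ∉ DSet g) : ContinuousAt g t :=
  continuousAt_iff_continuous_left'_right'.2 ⟨hlc t, hg.continuousWithinAt_Ioi_iff_rightLim_eq.2
    (le_antisymm (not_lt.1 ht) (hg.le_rightLim le_rfl))⟩

theorem genInv_lt_iff (hy : y ∈ Ico (g a) (g b)) (c : ℝ) : genInv g y < c ↔ y < g c := by
  constructor
  · intro h
    obtain ⟨u, hu, huc⟩ := exists_lt_of_csInf_lt ⟨b, hy.2⟩ h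
    exact hu.trans_le (hg huc.le)
  · intro h
    have hbdd : BddBelow {u | y < g u} := ⟨a, fun u hu => (hg.reflect_lt (hy.1.trans_lt hu)).le⟩
    obtain ⟨u, hyu, huc⟩ :=
      (((hlc c).eventually (eventually_gt_nhds h)).and self_mem_nhdsWithin).exists
    exact (csInf_le hbdd hyu).trans_lt huc

theorem genInv_mem_Ico_iff (hy : y ∈ Ico (g a) (g b)) {c d : ℝ} :
    genInv g y ∈ Ico c d ↔ y ∈ Ico (g c) (g d) := by
  simp only [mem_Ico, ← not_lt, genInv_lt_iff hg hlc hy]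

theorem monotoneOn_genInv : MonotoneOn (genInv g) (Ico (g a) (g b)) :=
  fun _ hy₁ _ hy₂ h => le_of_forall_gt fun c hc =>
    (genInv_lt_iff hg hlc hy₁ c).2 (h.trans_lt ((genInv_lt_iff hg hlc hy₂ c).1 hc))

theorem aemeasurable_genInv : AEMeasurable (genInv g) (volume.restrict (Ico (g a) (g b))) :=
  aemeasurable_restrict_of_monotoneOn measurableSet_Ico (monotoneOn_genInv hg hlc)

theorem apply_genInv_of_notMem_DSet (hy : y ∈ Ico (g a) (g b)) (hD : genInv g y ∉ DSet g) :
    g (genInv g y) = y := by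
  have hle : g (genInv g y) ≤ y :=
    not_lt.1 fun h => lt_irrefl _ ((genInv_lt_iff hg hlc hy _).2 h)
  have hge : y ≤ rightLim g (genInv g y) :=
    ge_of_tendsto (hg.tendsto_rightLim _) <| eventually_nhdsWithin_of_forall fun s hs =>
      ((genInv_lt_iff hg hlc hy s).1 hs).le
  exact le_antisymm hle (hge.trans (not_lt.1 hD))

end GenInv

section Pushforward

variable {E : Type*} [NormedAddCommGroup E]

noncomputable def compGenInv (g : ℝ → ℝ) (a b : ℝ) (f : ℝ → E) : ℝ → E :=
  (Ico (g a) (g b)).indicator (f ∘ genInv g)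

theorem compGenInv_of_mem {g : ℝ → ℝ} {a b y : ℝ} (f : ℝ → E)
    (hy : y ∈ Ico (g a) (g b)) :
    compGenInv g a b f y = f (genInv g y) :=
  indicator_of_mem hy _

variable {g : ℝ → ℝ} {μ : Measure ℝ} {a b : ℝ} (hg : Monotone g)
  (hμ : ∀ a b : ℝ, a ≤ b → μ (Ico a b) = ENNReal.ofReal (g b - g a))

include hg hμ in
theorem measure_Ico_eq_ofReal (a b : ℝ) : μ (Ico a b) = ENNReal.ofReal (g b - g a) := by
  rcases le_or_gt a b with hab | hba
  · exact hμ a b hab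
  · rw [Ico_eq_empty hba.not_gt, measure_empty, eq_comm, ENNReal.ofReal_eq_zero, sub_nonpos]
    exact hg hba.le

variable (hlc : ∀ t, ContinuousWithinAt g (Iio t) t)
include hg hlc hμ

theorem restrict_Ico_eq_map_genInv :
    μ.restrict (Ico a b) = (volume.restrict (Ico (g a) (g b))).map (genInv g) := by
  refine Measure.ext_of_Ico' _ _ (fun c d _ => ?_) (fun c d _ => ?_)
  · rw [Measure.restrict_apply measurableSet_Ico, Ico_inter_Ico, measure_Ico_eq_ofReal hg hμ]
    exact ENNReal.ofReal_ne_top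
  · have hpre :
        genInv g ⁻¹' Ico c d ∩ Ico (g a) (g b) = Ico (g c) (g d) ∩ Ico (g a) (g b) :=
      Set.ext fun y => and_congr_left fun hy => genInv_mem_Ico_iff hg hlc hy
    rw [Measure.map_apply_of_aemeasurable (aemeasurable_genInv hg hlc) measurableSet_Ico,
      Measure.restrict_apply' measurableSet_Ico, Measure.restrict_apply' measurableSet_Ico,
      hpre, Ico_inter_Ico, Ico_inter_Ico, Real.volume_Ico, measure_Ico_eq_ofReal hg hμ,
      hg.map_max, hg.map_min]

theorem integrableOn_comp_genInv {f : ℝ → E} (hf : IntegrableOn f (Ico a b) μ) :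
    IntegrableOn (f ∘ genInv g) (Ico (g a) (g b)) := by
  rw [IntegrableOn, restrict_Ico_eq_map_genInv hg hμ hlc] at hf
  exact (integrable_map_measure hf.aestronglyMeasurable (aemeasurable_genInv hg hlc)).1 hf

theorem setIntegral_Ico_eq_intervalIntegral_compGenInv [NormedSpace ℝ E] [CompleteSpace E]
    {f : ℝ → E} (hf : IntegrableOn f (Ico a b) μ) {s : ℝ} (hs : s ∈ Icc a b) :
    ∫ x in Ico a s, f x ∂μ = ∫ y in g a..g s, compGenInv g a b f y := by
  have hfs := (hf.mono_set (Ico_subset_Ico_right hs.2)).aestronglyMeasurable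
  rw [restrict_Ico_eq_map_genInv hg hμ hlc] at hfs
  rw [intervalIntegral.integral_of_le (hg hs.1), ← integral_Ico_eq_integral_Ioc,
    restrict_Ico_eq_map_genInv hg hμ hlc, integral_map (aemeasurable_genInv hg hlc) hfs]
  refine setIntegral_congr_fun measurableSet_Ico fun y hy => ?_
  exact (compGenInv_of_mem f (Ico_subset_Ico_right (hg hs.2) hy)).symm

theorem measure_Ico_inter_preimage_diff_DSet {S : Set ℝ} (hS : MeasurableSet S)
    (hS0 : volume S = 0) : μ (Ico a b ∩ (g ⁻¹' S \ DSet g)) = 0 := by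
  have hM : MeasurableSet (g ⁻¹' S \ DSet g) :=
    (hg.measurable hS).diff hg.countable_DSet.measurableSet
  rw [inter_comm, ← Measure.restrict_apply hM, restrict_Ico_eq_map_genInv hg hμ hlc,
    Measure.map_apply_of_aemeasurable (aemeasurable_genInv hg hlc) hM,
    Measure.restrict_apply' measurableSet_Ico]
  refine measure_mono_null (fun y ⟨⟨hyS, hyD⟩, hy⟩ => ?_) hS0
  exact apply_genInv_of_notMem_DSet hg hlc hy hyD ▸ hyS

end Pushforward

section Derivative

variable {E : Type*} [NormedAddCommGroup E] [NormedSpace ℝ E]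
  {g : ℝ → ℝ} {A : Set ℝ} {F Φ : ℝ → E} {L : E} {t : ℝ}

theorem tendsto_slope_of_hasDerivAt_comp (hΦ : HasDerivAt Φ L (g t))
    (hFΦ : ∀ s ∈ A, F s = Φ (g s)) (ht : t ∈ A) (hg : ContinuousWithinAt g A t)
    (hinj : ∀ s ∈ A, s ≠ t → g s ≠ g t) :
    Tendsto (fun s => (g s - g t)⁻¹ • (F s - F t)) (𝓝[A \ {t}] t) (𝓝 L) := by
  have hg' : Tendsto g (𝓝[A \ {t}] t) (𝓝[≠] (g t)) :=
    tendsto_nhdsWithin_iff.2 ⟨(hg.mono sdiff_subset).tendsto,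
      eventually_nhdsWithin_of_forall fun s hs => hinj s hs.1 hs.2⟩
  refine ((hasDerivAt_iff_tendsto_slope.1 hΦ).comp hg').congr' ?_
  filter_upwards [self_mem_nhdsWithin] with s hs
  rw [comp_apply, slope_def_module, hFΦ s hs.1, hFΦ t ht]

theorem intervalIntegral_compGenInv_rightLim [CompleteSpace E] (hg : Monotone g) {a b : ℝ}
    {f : ℝ → E} (ht : t ∈ Ico a b) :
    ∫ y in g t..rightLim g t, compGenInv g a b f y = (rightLim g t - g t) • f t := by
  have hconst : ∀ y ∈ Ico (g t) (rightLim g t), compGenInv g a b f y = f t := by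
    intro y hy
    have hgen : genInv g y = t := genInv_eq_of_forall_lt_iff fun u =>
      ⟨fun h => lt_of_not_ge fun hut => (hg hut).not_gt (hy.1.trans_lt h),
        fun h => hy.2.trans_le (hg.rightLim_le h)⟩
    rw [compGenInv_of_mem f ⟨(hg ht.1).trans hy.1, hy.2.trans_le (hg.rightLim_le ht.2)⟩, hgen]
  have hle : g t ≤ rightLim g t := hg.le_rightLim le_rfl
  rw [intervalIntegral.integral_of_le hle, ← integral_Ico_eq_integral_Ioc,
    setIntegral_congr_fun measurableSet_Ico hconst, setIntegral_const,
    Real.volume_real_Ico_of_le hle]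

theorem exists_tendsto_nhdsWithin_Ioi_sub_eq [CompleteSpace E] (hg : Monotone g) {a b : ℝ}
    {f : ℝ → E} (hφ : Integrable (compGenInv g a b f))
    (hFΦ : ∀ s ∈ Icc a b, F s = ∫ y in g a..g s, compGenInv g a b f y) (ht : t ∈ Icc a b) :
    ∃ Fp, Tendsto F (𝓝[Icc a b ∩ Ioi t] t) (𝓝 Fp) ∧
      Fp - F t = (rightLim g t - g t) • f t := by
  rcases ht.2.lt_or_eq with htb | rfl
  · refine ⟨∫ y in g a..rightLim g t, compGenInv g a b f y, ?_, ?_⟩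
    · refine ((hφ.continuous_primitive (g a)).continuousAt.tendsto.comp
        ((hg.tendsto_rightLim t).mono_left (nhdsWithin_mono _ inter_subset_right))).congr' ?_
      filter_upwards [self_mem_nhdsWithin] with s hs
      exact (hFΦ s hs.1).symm
    · rw [hFΦ t ht, intervalIntegral.integral_interval_sub_left hφ.intervalIntegrable
        hφ.intervalIntegrable]
      exact intervalIntegral_compGenInv_rightLim hg ⟨ht.1, htb⟩
  · refine ⟨F t + (rightLim g t - g t) • f t, ?_, add_sub_cancel_left _ _⟩
    have hempty : Icc a t ∩ Ioi t = ∅ :=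
      eq_empty_of_forall_notMem fun s hs => hs.2.not_ge hs.1.2
    rw [hempty, nhdsWithin_empty]
    exact tendsto_bot

theorem tendsto_slope_of_notMem_DSet [CompleteSpace E] (hg : Monotone g)
    (hlc : ∀ t, ContinuousWithinAt g (Iio t) t) {a b : ℝ} {f : ℝ → E}
    (hFΦ : ∀ s ∈ Icc a b, F s = ∫ y in g a..g s, compGenInv g a b f y) (ht : t ∈ Icc a b)
    (hjump : t ∉ DSet g) (hinj : ∀ s, s ≠ t → g s ≠ g t) (htb : g t ≠ g b)
    (hder : HasDerivAt (fun y => ∫ x in g a..y, compGenInv g a b f x)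
      (compGenInv g a b f (g t)) (g t)) :
    Tendsto (fun s => (g s - g t)⁻¹ • (F s - F t)) (𝓝[Icc a b \ {t}] t) (𝓝 (f t)) := by
  have hstrict : ∀ s, t < s → g t < g s := fun s hs => (hg hs.le).lt_of_ne (hinj s hs.ne').symm
  have htb' : t < b := ht.2.lt_of_ne (htb <| congrArg g ·)
  rw [← congrArg f (genInv_apply_of_forall_lt hg hstrict),
    ← compGenInv_of_mem f ⟨hg ht.1, hstrict b htb'⟩]
  exact tendsto_slope_of_hasDerivAt_comp hder hFΦ ht
    (continuousAt_of_notMem_DSet hg hlc hjump).continuousWithinAt fun s _ => hinj s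

end Derivative

theorem stmt0_general
    (g : ℝ → ℝ) (hg : Monotone g)
    (hlc : ∀ t : ℝ, ContinuousWithinAt g (Set.Iio t) t)
    (μ : Measure ℝ)
    (hμ : ∀ a b : ℝ, a ≤ b → μ (Set.Ico a b) = ENNReal.ofReal (g b - g a))
    (T : ℝ)
    (f : ℝ → ℝ) (hf : IntegrableOn f (Set.Icc 0 T) μ)
    (F : ℝ → ℝ) (hF : ∀ t ∈ Set.Icc 0 T, F t = ∫ s in Set.Ico 0 t, f s ∂μ) :
    ∃ N ⊆ Set.Icc 0 T, MeasurableSet N ∧ μ N = 0 ∧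
      ∀ t ∈ Set.Icc 0 T \ N, HasDerivG g (Set.Icc 0 T) F t (f t) := by
  have hfT : IntegrableOn f (Ico 0 T) μ := hf.mono_set Ico_subset_Icc_self
  set φ := compGenInv g 0 T f
  have hφ : Integrable φ :=
    (integrableOn_comp_genInv hg hμ hlc hfT).integrable_indicator measurableSet_Ico
  set Φ : ℝ → ℝ := fun y => ∫ x in g 0..y, φ x
  have hFΦ : ∀ s ∈ Icc 0 T, F s = Φ (g s) := fun s hs =>
    (hF s hs).trans (setIntegral_Ico_eq_intervalIntegral_compGenInv hg hμ hlc hfT hs)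
  set S := toMeasurable volume
    ({y | ∃ a b, a < b ∧ g a = y ∧ g b = y} ∪ {y | ¬HasDerivAt Φ (φ y) y} ∪ {g T})
  have hS0 : volume S = 0 := by
    rw [measure_toMeasurable]
    refine measure_union_null (measure_union_null
      (hg.countable_setOfPred_two_preimages.measure_zero _) ?_) (measure_singleton _)
    exact ae_iff.1 ((LocallyIntegrable.ae_hasDerivAt_integral hφ.locallyIntegrable).mono
      fun y hy => hy (g 0))
  refine ⟨Icc 0 T ∩ (g ⁻¹' S \ DSet g), inter_subset_left, measurableSet_Icc.inter
      ((hg.measurable (measurableSet_toMeasurable _ _)).diff hg.countable_DSet.measurableSet),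
    measure_mono_null (inter_subset_inter_left _ (Icc_subset_Ico_right (lt_add_one T)))
      (measure_Ico_inter_preimage_diff_DSet hg hμ hlc (measurableSet_toMeasurable _ _) hS0), ?_⟩
  rintro t ⟨ht, htN⟩
  rw [HasDerivG]
  split_ifs with hjump
  · obtain ⟨Fp, hFp, hFpt⟩ := exists_tendsto_nhdsWithin_Ioi_sub_eq hg hφ hFΦ ht
    exact ⟨Fp, hFp, by rw [hFpt, smul_smul, inv_mul_cancel₀ (sub_pos.2 hjump).ne', one_smul]⟩
  · have hgt : g t ∉ S := fun h => htN ⟨ht, h, hjump⟩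
    refine tendsto_slope_of_notMem_DSet hg hlc hFΦ ht hjump (fun s hst hgs => ?_)
      (fun h => hgt (subset_toMeasurable _ _ (.inr h)))
      (not_not.1 fun h => hgt (subset_toMeasurable _ _ (.inl (.inr h))))
    exact hgt <| subset_toMeasurable _ _ <| .inl <| .inl <|
      hst.lt_or_gt.elim (fun h => ⟨s, t, h, hgs, rfl⟩) fun h => ⟨t, s, h, rfl, hgs⟩

/-- Generalized Lebesgue differentiation theorem (scalar case): the indefinite
Lebesgue–Stieltjes integral of a `μ_g`-integrable function is `g`-differentiable
`μ_g`-a.e. with derivative `f`. -/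
theorem stmt0
    (g : ℝ → ℝ) (hg : Monotone g)
    (hlc : ∀ t : ℝ, ContinuousWithinAt g (Set.Iio t) t)
    (μ : Measure ℝ)
    (hμ : ∀ a b : ℝ, a ≤ b → μ (Set.Ico a b) = ENNReal.ofReal (g b - g a))
    (T : ℝ) (hT : 0 ≤ T)
    (f : ℝ → ℝ) (hf : IntegrableOn f (Set.Icc 0 T) μ)
    (F : ℝ → ℝ) (hF : ∀ t ∈ Set.Icc 0 T, F t = ∫ s in Set.Ico 0 t, f s ∂μ) :
    ∃ N ⊆ Set.Icc 0 T, MeasurableSet N ∧ μ N = 0 ∧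
      ∀ t ∈ Set.Icc 0 T \ N, HasDerivG g (Set.Icc 0 T) F t (f t) :=
  stmt0_general g hg hlc μ hμ T f hf F hF
end

section
/- Let V be a real reflexive separable Banach space continuously and densely embedded in a Hilbert space H (identified with its dual), so V ⊆ H ⊆ V'. Let 1 ≤ p, q ≤ ∞ and u ∈ W̃^{1,p,q}_g([0,T], V, V'), i.e., u ∈ L^p_g([0,T], V) and there exists ũ ∈ L^q_g([0,T], V') with u(t) = u(0) + ∫_{[0,t)} ũ dμ_g in V' for all t ∈ [0,T]. Then ũ is unique up to a μ_g-null set, and moreover ũ(t) = u'_g(t) for μ_g-a.e. t ∈ [0,T]. -/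
/-!
Let `φ = pseudoInv g T` be the generalized inverse of `g` on `[0, T]`. It pushes Lebesgue measure on
`[g 0, g T)` forward to `μ_g` on `[0, T)`, so `u t = u 0 + G (g t)`, where `G` is the Lebesgue
primitive of `ũ ∘ φ`. At a jump `t` of `g` we have `φ = t` on `[g t, g t⁺)`, so the jump quotient
of `u` is exactly `ũ t`. For `μ_g`-almost every other `t`, the value `g t` is a Lebesgue point of
`ũ ∘ φ` at which `φ` is continuous; then `g` takes the value `g t` only at `t`, `φ (g t) = t`, and
the chain rule gives the `g`-derivative `G' (g t) = ũ t`. Uniqueness of `ũ` follows from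
uniqueness of the `g`-derivative.
-/

open MeasureTheory Filter Set ENNReal

/-- The embedding `V ⊆ H ≡ H' ⊆ V'` of a Gelfand triple: `v` is sent to the
functional `w ↦ ⟪j v, j w⟫_H` on `V`. -/
noncomputable def gelfandEmb {V H : Type*} [NormedAddCommGroup V] [NormedSpace ℝ V]
    [NormedAddCommGroup H] [InnerProductSpace ℝ H] [CompleteSpace H]
    (j : V →L[ℝ] H) : V → StrongDual ℝ V :=
  fun v => ((InnerProductSpace.toDual ℝ H (j v)) : H →L[ℝ] ℝ).comp j

open scoped Topology
open Function (rightLim)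

section HasDerivG

variable {E : Type*} [NormedAddCommGroup E] [NormedSpace ℝ E]
  {g : ℝ → ℝ} {A : Set ℝ} {F F₁ F₂ G : ℝ → E} {t : ℝ} {L L₁ L₂ : E}

theorem HasDerivG.congr_of_eqOn (h : HasDerivG g A F₁ t L) (hF : EqOn F₁ F₂ A)
    (ht : t ∈ A) : HasDerivG g A F₂ t L := by
  unfold HasDerivG at h ⊢
  split_ifs at h ⊢
  · obtain ⟨Fp, hlim, rfl⟩ := h
    exact ⟨Fp, hlim.congr' (eventually_nhdsWithin_of_forall fun s hs => hF hs.1), by rw [hF ht]⟩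
  · exact h.congr' (eventually_nhdsWithin_of_forall fun s hs => by rw [hF hs.1, hF ht])

theorem HasDerivG.unique {b : ℝ} (h₁ : HasDerivG g A F t L₁) (h₂ : HasDerivG g A F t L₂)
    (htb : t < b) (hA : Ioo t b ⊆ A) : L₁ = L₂ := by
  have hne : ∀ {B : Set ℝ}, Ioo t b ⊆ B → (𝓝[B] t).NeBot := fun hB =>
    (nhdsWithin_Ioo_eq_nhdsGT htb ▸ nhdsGT_neBot t).mono (nhdsWithin_mono t hB)
  unfold HasDerivG at h₁ h₂
  split_ifs at h₁ h₂
  · obtain ⟨Fp₁, hlim₁, rfl⟩ := h₁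
    obtain ⟨Fp₂, hlim₂, rfl⟩ := h₂
    have := hne (subset_inter hA Ioo_subset_Ioi_self)
    rw [tendsto_nhds_unique hlim₁ hlim₂]
  · have := hne (subset_sdiff_singleton hA (fun h => (lt_irrefl t h.1)))
    exact tendsto_nhds_unique h₁ h₂

theorem hasDerivG_comp_of_lt_rightLim (hg : Monotone g) (hG : ContinuousAt G (rightLim g t))
    (hjump : g t < rightLim g t) :
    HasDerivG g A (G ∘ g) t ((rightLim g t - g t)⁻¹ • (G (rightLim g t) - G (g t))) := by
  rw [HasDerivG, if_pos hjump]
  exact ⟨_, (hG.tendsto.comp (hg.tendsto_rightLim t)).mono_left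
    (nhdsWithin_mono t inter_subset_right), rfl⟩

theorem hasDerivG_comp_of_hasDerivAt (hG : HasDerivAt G L (g t)) (hgt : ContinuousAt g t)
    (hjump : ¬ g t < rightLim g t) (hinj : ∀ s ∈ A, g s = g t → s = t) :
    HasDerivG g A (G ∘ g) t L := by
  rw [HasDerivG, if_neg hjump]
  have hg_ne : Tendsto g (𝓝[A \ {t}] t) (𝓝[≠] (g t)) :=
    tendsto_nhdsWithin_of_tendsto_nhds_of_eventually_within _
      (hgt.tendsto.mono_left nhdsWithin_le_nhds)
      (eventually_nhdsWithin_of_forall fun s hs => fun hst => hs.2 (hinj s hs.1 hst))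
  exact (hasDerivAt_iff_tendsto_slope.1 hG).comp hg_ne

end HasDerivG

theorem Monotone.continuousAt_of_not_lt_rightLim {g : ℝ → ℝ} {t : ℝ} (hg : Monotone g)
    (hlc : ContinuousWithinAt g (Iio t) t) (hjump : ¬ g t < rightLim g t) :
    ContinuousAt g t :=
  continuousAt_iff_continuous_left_right.2 ⟨continuousWithinAt_Iio_iff_Iic.1 hlc,
    continuousWithinAt_Ioi_iff_Ici.1 <| hg.continuousWithinAt_Ioi_iff_rightLim_eq.2 <|
      le_antisymm (not_lt.1 hjump) (hg.le_rightLim le_rfl)⟩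

theorem Monotone.countable_setOf_lt_rightLim {g : ℝ → ℝ} (hg : Monotone g) :
    {t | g t < rightLim g t}.Countable :=
  hg.countable_not_continuousAt.mono
    fun t (ht : g t < rightLim g t) (hcont : ContinuousAt g t) =>
    ht.ne' (hg.continuousWithinAt_Ioi_iff_rightLim_eq.1 hcont.continuousWithinAt)

noncomputable def pseudoInv (g : ℝ → ℝ) (T y : ℝ) : ℝ :=
  sSup (insert 0 {t ∈ Icc 0 T | g t ≤ y})

section PseudoInverse

variable {g : ℝ → ℝ} {T t s y : ℝ}

theorem bddAbove_pseudoInv_set : BddAbove (insert 0 {t ∈ Icc 0 T | g t ≤ y}) :=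
  (bddAbove_Icc.mono (sep_subset _ _)).insert 0

theorem pseudoInv_le {a : ℝ} (ha : 0 ≤ a) (h : ∀ t ∈ Icc 0 T, g t ≤ y → t ≤ a) :
    pseudoInv g T y ≤ a :=
  csSup_le (insert_nonempty _ _) <| by
    rintro _ (rfl | ⟨ht, hty⟩)
    exacts [ha, h _ ht hty]

theorem pseudoInv_mem_Icc (hT : 0 ≤ T) (y : ℝ) : pseudoInv g T y ∈ Icc 0 T :=
  ⟨le_csSup bddAbove_pseudoInv_set (mem_insert _ _), pseudoInv_le hT fun _ ht _ => ht.2⟩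

theorem monotone_pseudoInv : Monotone (pseudoInv g T) := fun _ _ hyy' =>
  csSup_le_csSup bddAbove_pseudoInv_set (insert_nonempty _ _)
    (insert_subset_insert fun _ ht => ⟨ht.1, ht.2.trans hyy'⟩)

theorem apply_le_of_le_pseudoInv (hg : Monotone g) (hlc : ContinuousWithinAt g (Iio t) t)
    (hy : g 0 ≤ y) (h : t ≤ pseudoInv g T y) : g t ≤ y :=
  le_of_tendsto hlc <| eventually_nhdsWithin_of_forall fun s (hs : s < t) => by
    obtain ⟨x, hx, hsx⟩ := exists_lt_of_lt_csSup (insert_nonempty _ _) (hs.trans_le h)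
    rcases hx with rfl | ⟨-, hxy⟩
    exacts [(hg hsx.le).trans hy, (hg hsx.le).trans hxy]

theorem le_pseudoInv_iff (hg : Monotone g) (hlc : ContinuousWithinAt g (Iio t) t)
    (ht : t ∈ Icc 0 T) (hy : g 0 ≤ y) : t ≤ pseudoInv g T y ↔ g t ≤ y :=
  ⟨apply_le_of_le_pseudoInv hg hlc hy,
    fun h => le_csSup bddAbove_pseudoInv_set (Or.inr ⟨ht, h⟩)⟩

theorem pseudoInv_lt_iff (hg : Monotone g) (hlc : ContinuousWithinAt g (Iio t) t)
    (ht : t ∈ Icc 0 T) (hy : g 0 ≤ y) : pseudoInv g T y < t ↔ y < g t := by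
  simpa only [not_le] using (le_pseudoInv_iff hg hlc ht hy).not

theorem apply_pseudoInv_le (hg : Monotone g) (hlc : ∀ t, ContinuousWithinAt g (Iio t) t)
    (hy : g 0 ≤ y) : g (pseudoInv g T y) ≤ y :=
  apply_le_of_le_pseudoInv hg (hlc _) hy le_rfl

theorem pseudoInv_mem_Ico (hg : Monotone g) (hlc : ∀ t, ContinuousWithinAt g (Iio t) t)
    (hT : 0 ≤ T) (hy : y ∈ Ico (g 0) (g T)) : pseudoInv g T y ∈ Ico 0 T :=
  ⟨(pseudoInv_mem_Icc hT y).1, (pseudoInv_lt_iff hg (hlc _) (right_mem_Icc.2 hT) hy.1).2 hy.2⟩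

theorem pseudoInv_eq_of_mem_Ico_rightLim (hg : Monotone g)
    (hlc : ∀ t, ContinuousWithinAt g (Iio t) t) (ht : t ∈ Ico 0 T)
    (hy : y ∈ Ico (g t) (rightLim g t)) : pseudoInv g T y = t := by
  have hy0 : g 0 ≤ y := (hg ht.1).trans hy.1
  refine le_antisymm (not_lt.1 fun hlt => ?_)
    ((le_pseudoInv_iff hg (hlc t) (Ico_subset_Icc_self ht) hy0).2 hy.1)
  exact (hy.2.trans_le (hg.rightLim_le hlt)).not_ge (apply_pseudoInv_le hg hlc hy0)

theorem apply_pseudoInv_eq (hg : Monotone g) (hlc : ∀ t, ContinuousWithinAt g (Iio t) t)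
    (hT : 0 ≤ T) (hy : y ∈ Ico (g 0) (g T))
    (hjump : ¬ g (pseudoInv g T y) < rightLim g (pseudoInv g T y)) :
    g (pseudoInv g T y) = y := by
  set x := pseudoInv g T y
  have hx := pseudoInv_mem_Icc hT y (g := g)
  have hlim : y ≤ rightLim g x :=
    ge_of_tendsto (hg.tendsto_rightLim x) <| eventually_nhdsWithin_of_forall
      fun s (hs : x < s) => by
      rcases le_or_gt s T with hsT | hTs
      · exact ((pseudoInv_lt_iff hg (hlc _) ⟨hx.1.trans hs.le, hsT⟩ hy.1).1 hs).le
      · exact hy.2.le.trans (hg hTs.le)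
  exact le_antisymm (apply_pseudoInv_le hg hlc hy.1) (hlim.trans (not_lt.1 hjump))

theorem not_continuousAt_pseudoInv_of_apply_eq (hg : Monotone g)
    (hlc : ContinuousWithinAt g (Iio s) s) (ht : t ∈ Icc 0 T) (hs : s ∈ Icc 0 T) (hts : t < s)
    (hgts : g t = g s) : ¬ ContinuousAt (pseudoInv g T) (g s) := fun hcont => by
  have hle : pseudoInv g T (g s) ≤ t :=
    le_of_tendsto (hcont.tendsto.mono_left nhdsWithin_le_nhds)
      (eventually_nhdsWithin_of_forall (s := Iio (g s)) fun y hy =>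
        pseudoInv_le ht.1 fun r _ hr => (hg.reflect_lt (hr.trans_lt (hgts ▸ hy))).le)
  exact hts.not_ge (((le_pseudoInv_iff hg hlc hs (hg hs.1)).2 le_rfl).trans hle)

theorem eq_of_apply_eq_of_continuousAt_pseudoInv (hg : Monotone g)
    (hlc : ∀ t, ContinuousWithinAt g (Iio t) t)
    (hφ : ContinuousAt (pseudoInv g T) (g t)) (ht : t ∈ Icc 0 T) (hs : s ∈ Icc 0 T)
    (hst : g s = g t) : s = t := by
  rcases lt_trichotomy s t with hlt | rfl | hlt
  · exact absurd hφ (not_continuousAt_pseudoInv_of_apply_eq hg (hlc t) hs ht hlt hst)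
  · rfl
  · exact absurd hφ (hst ▸ not_continuousAt_pseudoInv_of_apply_eq hg (hlc s) ht hs hlt hst.symm)

theorem lt_projIcc_iff {x : ℝ} (hT : 0 ≤ T) (hx : x ∈ Ico 0 T) (a : ℝ) :
    x < projIcc 0 T hT a ↔ x < a := by
  simp only [coe_projIcc, lt_max_iff, lt_min_iff]
  constructor
  · rintro (h | ⟨-, h⟩)
    exacts [absurd hx.1 h.not_ge, h]
  · exact fun h => Or.inr ⟨hx.2, h⟩

theorem Iio_inter_Ico_eq_Ico_projIcc (hT : 0 ≤ T) (a : ℝ) :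
    Iio a ∩ Ico 0 T = Ico 0 (projIcc 0 T hT a : ℝ) := by
  ext x
  refine ⟨fun ⟨hxa, hx⟩ => ⟨hx.1, (lt_projIcc_iff hT hx a).2 hxa⟩, fun hx => ?_⟩
  have hx' : x ∈ Ico 0 T := ⟨hx.1, hx.2.trans_le (projIcc 0 T hT a).2.2⟩
  exact ⟨(lt_projIcc_iff hT hx' a).1 hx.2, hx'⟩

theorem pseudoInv_preimage_Iio_inter (hg : Monotone g)
    (hlc : ∀ t, ContinuousWithinAt g (Iio t) t) (hT : 0 ≤ T) (a : ℝ) :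
    pseudoInv g T ⁻¹' Iio a ∩ Ico (g 0) (g T) = Ico (g 0) (g (projIcc 0 T hT a)) := by
  ext y
  refine ⟨fun ⟨hya, hy⟩ => ⟨hy.1, ?_⟩, fun hy => ?_⟩
  · exact (pseudoInv_lt_iff hg (hlc _) (projIcc 0 T hT a).2 hy.1).1
      ((lt_projIcc_iff hT (pseudoInv_mem_Ico hg hlc hT hy) a).2 hya)
  · have hy' : y ∈ Ico (g 0) (g T) := ⟨hy.1, hy.2.trans_le (hg (projIcc 0 T hT a).2.2)⟩
    exact ⟨(lt_projIcc_iff hT (pseudoInv_mem_Ico hg hlc hT hy') a).1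
      ((pseudoInv_lt_iff hg (hlc _) (projIcc 0 T hT a).2 hy.1).2 hy.2), hy'⟩

theorem map_pseudoInv_volume {μ : Measure ℝ} (hg : Monotone g)
    (hlc : ∀ t, ContinuousWithinAt g (Iio t) t)
    (hμ : ∀ a b, a ≤ b → μ (Ico a b) = ENNReal.ofReal (g b - g a)) (hT : 0 ≤ T) :
    (volume.restrict (Ico (g 0) (g T))).map (pseudoInv g T) = μ.restrict (Ico 0 T) := by
  have hφ : Measurable (pseudoInv g T) := monotone_pseudoInv.measurable
  refine ext_of_generate_finite _
    (BorelSpace.measurable_eq.trans (borel_eq_generateFrom_Iio ℝ)) isPiSystem_Iio ?_ ?_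
  · rintro _ ⟨a, rfl⟩
    rw [Measure.map_apply hφ measurableSet_Iio, Measure.restrict_apply (hφ measurableSet_Iio),
      Measure.restrict_apply measurableSet_Iio, pseudoInv_preimage_Iio_inter hg hlc hT,
      Iio_inter_Ico_eq_Ico_projIcc hT, Real.volume_Ico, hμ _ _ (projIcc 0 T hT a).2.1]
  · rw [Measure.map_apply hφ MeasurableSet.univ, preimage_univ, Measure.restrict_apply_univ,
      Measure.restrict_apply_univ, Real.volume_Ico, hμ 0 T hT]

variable {E : Type*} [NormedAddCommGroup E] {μ : Measure ℝ} {f : ℝ → E}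

theorem setIntegral_Ico_eq_setIntegral_pseudoInv [NormedSpace ℝ E] (hg : Monotone g)
    (hlc : ∀ t, ContinuousWithinAt g (Iio t) t)
    (hμ : ∀ a b, a ≤ b → μ (Ico a b) = ENNReal.ofReal (g b - g a)) (hT : 0 ≤ T)
    (hf : AEStronglyMeasurable f (μ.restrict (Ico 0 T))) (hs : s ∈ Icc 0 T) :
    ∫ x in Ico 0 s, f x ∂μ = ∫ y in Ico (g 0) (g s), f (pseudoInv g T y) := by
  have hφ : Measurable (pseudoInv g T) := monotone_pseudoInv.measurable
  have hs' : (projIcc 0 T hT s : ℝ) = s := by rw [projIcc_of_mem hT hs]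
  rw [← hs', ← Iio_inter_Ico_eq_Ico_projIcc hT, ← Measure.restrict_restrict measurableSet_Iio,
    ← map_pseudoInv_volume hg hlc hμ hT, setIntegral_map measurableSet_Iio _ hφ.aemeasurable,
    Measure.restrict_restrict (hφ measurableSet_Iio), pseudoInv_preimage_Iio_inter hg hlc hT]
  rwa [map_pseudoInv_volume hg hlc hμ hT]

theorem integrableOn_comp_pseudoInv (hg : Monotone g)
    (hlc : ∀ t, ContinuousWithinAt g (Iio t) t)
    (hμ : ∀ a b, a ≤ b → μ (Ico a b) = ENNReal.ofReal (g b - g a)) (hT : 0 ≤ T)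
    (hf : IntegrableOn f (Ico 0 T) μ) :
    IntegrableOn (f ∘ pseudoInv g T) (Ico (g 0) (g T)) := by
  rw [IntegrableOn, ← map_pseudoInv_volume hg hlc hμ hT] at hf
  exact (integrable_map_measure hf.1 monotone_pseudoInv.measurable.aemeasurable).1 hf

theorem ae_lt_rightLim_or_of_ae (hg : Monotone g)
    (hlc : ∀ t, ContinuousWithinAt g (Iio t) t)
    (hμ : ∀ a b, a ≤ b → μ (Ico a b) = ENNReal.ofReal (g b - g a)) (hT : 0 ≤ T)
    {P : ℝ → Prop} (hP : ∀ᵐ y, P y) :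
    ∀ᵐ t ∂μ.restrict (Ico 0 T), g t < rightLim g t ∨ P (g t) := by
  obtain ⟨N, hPN, hNm, hN⟩ := exists_measurable_superset_of_null (ae_iff.1 hP)
  have hgood : ∀ᵐ t ∂μ.restrict (Ico 0 T), g t < rightLim g t ∨ g t ∉ N := by
    have hmeas : MeasurableSet {t | g t < rightLim g t ∨ g t ∉ N} :=
      hg.countable_setOf_lt_rightLim.measurableSet.union (hg.measurable hNm).compl
    rw [← map_pseudoInv_volume hg hlc hμ hT,
      ae_map_iff monotone_pseudoInv.measurable.aemeasurable hmeas]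
    filter_upwards [ae_restrict_mem measurableSet_Ico,
      ae_restrict_of_ae (measure_eq_zero_iff_ae_notMem.1 hN)] with y hy hyN
    refine or_iff_not_imp_left.2 fun hjump => ?_
    rwa [apply_pseudoInv_eq hg hlc hT hy hjump]
  filter_upwards [hgood] with t ht
  exact ht.imp_right fun htN => not_not.1 fun hPt => htN (hPN hPt)

theorem pseudoInv_apply_eq_of_continuousAt (hg : Monotone g)
    (hlc : ∀ t, ContinuousWithinAt g (Iio t) t) (hT : 0 ≤ T)
    (hφ : ContinuousAt (pseudoInv g T) (g t)) (ht : t ∈ Icc 0 T) : pseudoInv g T (g t) = t :=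
  eq_of_apply_eq_of_continuousAt_pseudoInv hg hlc hφ ht (pseudoInv_mem_Icc hT _) <|
    le_antisymm (apply_pseudoInv_le hg hlc (hg ht.1))
      (hg ((le_pseudoInv_iff hg (hlc t) ht (hg ht.1)).2 le_rfl))

theorem integral_indicator_comp_pseudoInv_rightLim [NormedSpace ℝ E] [CompleteSpace E]
    (hg : Monotone g) (hlc : ∀ t, ContinuousWithinAt g (Iio t) t) (ht : t ∈ Ico 0 T) :
    ∫ y in g t..rightLim g t, (Ico (g 0) (g T)).indicator (f ∘ pseudoInv g T) y =
      (rightLim g t - g t) • f t := by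
  have hle : g t ≤ rightLim g t := hg.le_rightLim le_rfl
  rw [intervalIntegral.integral_of_le hle, integral_Ioc_eq_integral_Ioo,
    setIntegral_congr_fun measurableSet_Ioo (g := fun _ => f t) fun y hy => ?_,
    setIntegral_const, Real.volume_real_Ioo_of_le hle]
  have hyJ : y ∈ Ico (g 0) (g T) :=
    ⟨(hg ht.1).trans hy.1.le, hy.2.trans_le (hg.rightLim_le ht.2)⟩
  rw [indicator_of_mem hyJ, Function.comp_apply,
    pseudoInv_eq_of_mem_Ico_rightLim hg hlc ht ⟨hy.1.le, hy.2⟩]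

theorem hasDerivG_comp_of_continuousAt_pseudoInv [NormedSpace ℝ E] {G : ℝ → E}
    (hg : Monotone g) (hlc : ∀ t, ContinuousWithinAt g (Iio t) t) (hT : 0 ≤ T)
    (ht : t ∈ Ico 0 T) (hjump : ¬ g t < rightLim g t)
    (hG : HasDerivAt G ((Ico (g 0) (g T)).indicator (f ∘ pseudoInv g T) (g t)) (g t))
    (hφ : ContinuousAt (pseudoInv g T) (g t)) :
    HasDerivG g (Icc 0 T) (G ∘ g) t (f t) := by
  have hinj : ∀ s ∈ Icc 0 T, g s = g t → s = t := fun s hs hst =>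
    eq_of_apply_eq_of_continuousAt_pseudoInv hg hlc hφ (Ico_subset_Icc_self ht) hs hst
  have hgtJ : g t ∈ Ico (g 0) (g T) :=
    ⟨hg ht.1, (hg ht.2.le).lt_of_ne fun hgT => ht.2.ne' (hinj T (right_mem_Icc.2 hT) hgT.symm)⟩
  rw [indicator_of_mem hgtJ, Function.comp_apply,
    pseudoInv_apply_eq_of_continuousAt hg hlc hT hφ (Ico_subset_Icc_self ht)] at hG
  exact hasDerivG_comp_of_hasDerivAt hG (hg.continuousAt_of_not_lt_rightLim (hlc t) hjump)
    hjump hinj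

theorem ae_hasDerivG_of_eq_add_setIntegral [NormedSpace ℝ E] [CompleteSpace E] {F : ℝ → E}
    (hg : Monotone g) (hlc : ∀ t, ContinuousWithinAt g (Iio t) t)
    (hμ : ∀ a b, a ≤ b → μ (Ico a b) = ENNReal.ofReal (g b - g a)) (hT : 0 ≤ T)
    (hf : IntegrableOn f (Ico 0 T) μ)
    (hF : ∀ t ∈ Icc 0 T, F t = F 0 + ∫ s in Ico 0 t, f s ∂μ) :
    ∀ᵐ t ∂μ.restrict (Ico 0 T), HasDerivG g (Icc 0 T) F t (f t) := by
  set h := (Ico (g 0) (g T)).indicator (f ∘ pseudoInv g T)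
  set G : ℝ → E := fun y => F 0 + ∫ x in g 0..y, h x
  have hh : Integrable h :=
    (integrable_indicator_iff measurableSet_Ico).2 (integrableOn_comp_pseudoInv hg hlc hμ hT hf)
  have hG_sub : ∀ a b, G b - G a = ∫ x in a..b, h x := fun a b => by
    rw [add_sub_add_left_eq_sub, intervalIntegral.integral_interval_sub_left
      hh.intervalIntegrable hh.intervalIntegrable]
  have hFG : EqOn (G ∘ g) F (Icc 0 T) := fun s hs => by
    change F 0 + ∫ x in g 0..g s, h x = F s
    rw [hF s hs, setIntegral_Ico_eq_setIntegral_pseudoInv hg hlc hμ hT hf.1 hs,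
      intervalIntegral.integral_of_le (hg hs.1),
      ← integral_Ico_eq_integral_Ioc]
    exact congrArg _ (setIntegral_congr_fun measurableSet_Ico fun y hy =>
      indicator_of_mem (s := Ico (g 0) (g T)) ⟨hy.1, hy.2.trans_le (hg hs.2)⟩ _)
  have hP : ∀ᵐ y, HasDerivAt G (h y) y ∧ ContinuousAt (pseudoInv g T) y := by
    filter_upwards [LocallyIntegrable.ae_hasDerivAt_integral hh.locallyIntegrable,
      monotone_pseudoInv.countable_not_continuousAt.ae_notMem volume] with y hderiv hcont
    exact ⟨(hderiv (g 0)).const_add (F 0), not_not.1 hcont⟩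
  filter_upwards [ae_restrict_mem measurableSet_Ico, ae_lt_rightLim_or_of_ae hg hlc hμ hT hP]
    with t ht hgood
  refine HasDerivG.congr_of_eqOn ?_ hFG (Ico_subset_Icc_self ht)
  by_cases hjump : g t < rightLim g t
  · convert hasDerivG_comp_of_lt_rightLim hg
      ((hh.continuous_primitive _).const_add (F 0)).continuousAt hjump using 1
    rw [hG_sub, integral_indicator_comp_pseudoInv_rightLim hg hlc ht, smul_smul,
      inv_mul_cancel₀ (sub_pos.2 hjump).ne', one_smul]
  · obtain ⟨hGt, hφt⟩ := hgood.resolve_left hjump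
    exact hasDerivG_comp_of_continuousAt_pseudoInv hg hlc hT ht hjump hGt hφt

end PseudoInverse

theorem stmt4_general
    {V H : Type*} [NormedAddCommGroup V] [NormedSpace ℝ V]
    [NormedAddCommGroup H] [InnerProductSpace ℝ H] [CompleteSpace H]
    (j : V →L[ℝ] H)
    (g : ℝ → ℝ) (hg : Monotone g)
    (hlc : ∀ t : ℝ, ContinuousWithinAt g (Set.Iio t) t)
    (μ : Measure ℝ)
    (hμ : ∀ a b : ℝ, a ≤ b → μ (Set.Ico a b) = ENNReal.ofReal (g b - g a))
    (T : ℝ) (hT : 0 ≤ T)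
    (q : ℝ≥0∞) (hq : 1 ≤ q)
    (u : ℝ → V)
    (ut : ℝ → StrongDual ℝ V)
    (hut : MemLp ut q (μ.restrict (Set.Ico 0 T)))
    (hrep : ∀ t ∈ Set.Icc 0 T,
      gelfandEmb j (u t) = gelfandEmb j (u 0) + ∫ s in Set.Ico 0 t, ut s ∂μ) :
    (∀ ut₂ : ℝ → StrongDual ℝ V,
        MemLp ut₂ q (μ.restrict (Set.Ico 0 T)) →
        (∀ t ∈ Set.Icc 0 T,
          gelfandEmb j (u t) = gelfandEmb j (u 0) + ∫ s in Set.Ico 0 t, ut₂ s ∂μ) →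
        ut =ᵐ[μ.restrict (Set.Ico 0 T)] ut₂) ∧
      (∀ᵐ t ∂μ.restrict (Set.Ico 0 T),
        HasDerivG g (Set.Icc 0 T) (fun s => gelfandEmb j (u s)) t (ut t)) := by
  have : IsFiniteMeasure (μ.restrict (Ico 0 T)) := ⟨by simp [hμ 0 T hT]⟩
  have hderiv : ∀ f : ℝ → StrongDual ℝ V, MemLp f q (μ.restrict (Ico 0 T)) →
      (∀ t ∈ Icc 0 T, gelfandEmb j (u t) = gelfandEmb j (u 0) + ∫ s in Ico 0 t, f s ∂μ) →
      ∀ᵐ t ∂μ.restrict (Ico 0 T),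
        HasDerivG g (Icc 0 T) (fun s => gelfandEmb j (u s)) t (f t) := fun f hf hrepf =>
    ae_hasDerivG_of_eq_add_setIntegral hg hlc hμ hT (hf.integrable hq) hrepf
  refine ⟨fun ut₂ hut₂ hrep₂ => ?_, hderiv ut hut hrep⟩
  filter_upwards [hderiv ut hut hrep, hderiv ut₂ hut₂ hrep₂, ae_restrict_mem measurableSet_Ico]
    with t h₁ h₂ ht
  exact h₁.unique h₂ ht.2 fun s hs => ⟨ht.1.trans hs.1.le, hs.2.le⟩

/-- For `u` in the Stieltjes–Sobolev–Bochner space `W̃¹⁽ᵖ'ᑫ⁾_g([0,T],V,V')`, the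
function `ũ` in the integral representation is unique up to a `μ_g`-null set, and it
coincides `μ_g`-a.e. with the `g`-derivative of `u` (seen in `V'`). -/
theorem stmt4
    {V H : Type*} [NormedAddCommGroup V] [NormedSpace ℝ V] [CompleteSpace V]
    [TopologicalSpace.SeparableSpace V]
    [NormedAddCommGroup H] [InnerProductSpace ℝ H] [CompleteSpace H]
    (hVrefl : Function.Bijective (NormedSpace.inclusionInDoubleDual ℝ V))
    (j : V →L[ℝ] H) (hj : Function.Injective j) (hjd : DenseRange j)
    (g : ℝ → ℝ) (hg : Monotone g)
    (hlc : ∀ t : ℝ, ContinuousWithinAt g (Set.Iio t) t)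
    (μ : Measure ℝ)
    (hμ : ∀ a b : ℝ, a ≤ b → μ (Set.Ico a b) = ENNReal.ofReal (g b - g a))
    (T : ℝ) (hT : 0 ≤ T)
    (p q : ℝ≥0∞) (hp : 1 ≤ p) (hq : 1 ≤ q)
    (u : ℝ → V) (hu : MemLp u p (μ.restrict (Set.Ico 0 T)))
    (ut : ℝ → StrongDual ℝ V)
    (hut : MemLp ut q (μ.restrict (Set.Ico 0 T)))
    (hrep : ∀ t ∈ Set.Icc 0 T,
      gelfandEmb j (u t) = gelfandEmb j (u 0) + ∫ s in Set.Ico 0 t, ut s ∂μ) :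
    (∀ ut₂ : ℝ → StrongDual ℝ V,
        MemLp ut₂ q (μ.restrict (Set.Ico 0 T)) →
        (∀ t ∈ Set.Icc 0 T,
          gelfandEmb j (u t) = gelfandEmb j (u 0) + ∫ s in Set.Ico 0 t, ut₂ s ∂μ) →
        ut =ᵐ[μ.restrict (Set.Ico 0 T)] ut₂) ∧
      (∀ᵐ t ∂μ.restrict (Set.Ico 0 T),
        HasDerivG g (Set.Icc 0 T) (fun s => gelfandEmb j (u s)) t (ut t)) :=
  stmt4_general j g hg hlc μ hμ T hT q hq u ut hut hrep
end

section
/- Let g be nondecreasing and left-continuous and let u, v ∈ L^q_g([0,T], V') for some Banach space V'. If ∫_{[0,t)} u dμ_g = ∫_{[0,t)} v dμ_g in V' for every t ∈ [0,T], then u(t) = v(t) for μ_g-a.e. t ∈ [0,T]. -/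
open MeasureTheory Filter Set ENNReal Topology

/-! The half-lines `Iio t` form a π-system generating the Borel σ-algebra of `ℝ`, and the sets on
which an integrable function has vanishing integral form a Dynkin system (complements because
`Iio t` exhausts `ℝ`, disjoint unions by countable additivity of the integral). Hence equal
integrals on every `[0, t)` force equal integrals on every measurable subset of `[0, T)`, and so
a.e. equality. -/

section IioIntegrals

variable {E : Type*} [NormedAddCommGroup E] [NormedSpace ℝ E] {ν : Measure ℝ} {f : ℝ → E}

theorem integral_eq_zero_of_forall_setIntegral_Iio_eq_zero (hf : Integrable f ν)
    (h : ∀ t, ∫ x in Iio t, f x ∂ν = 0) : ∫ x, f x ∂ν = 0 := by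
  have hlim : Tendsto (fun t => ∫ x in Iio t, f x ∂ν) atTop (𝓝 (∫ x in ⋃ t, Iio t, f x ∂ν)) :=
    tendsto_setIntegral_of_monotone (fun _ => measurableSet_Iio) (fun _ _ => Iio_subset_Iio)
      hf.integrableOn
  rw [iUnion_Iio, setIntegral_univ] at hlim
  simp only [h] at hlim
  exact tendsto_nhds_unique hlim tendsto_const_nhds

theorem setIntegral_eq_zero_of_forall_setIntegral_Iio_eq_zero (hf : Integrable f ν)
    (h : ∀ t, ∫ x in Iio t, f x ∂ν = 0) {s : Set ℝ} (hs : MeasurableSet s) :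
    ∫ x in s, f x ∂ν = 0 := by
  induction s, hs using MeasurableSpace.induction_on_inter
    (borel_eq_generateFrom_Iio ℝ ▸ BorelSpace.measurable_eq) isPiSystem_Iio with
  | empty => exact setIntegral_empty
  | basic _ ht => obtain ⟨t, rfl⟩ := ht; exact h t
  | compl s hs ihs =>
    simpa [ihs, integral_eq_zero_of_forall_setIntegral_Iio_eq_zero hf h] using
      integral_add_compl hs hf
  | iUnion s hdisj hs ihs => simp [integral_iUnion hs hdisj hf.integrableOn, ihs]

variable [CompleteSpace E]

theorem ae_eq_zero_of_forall_setIntegral_Iio_eq_zero (hf : Integrable f ν)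
    (h : ∀ t, ∫ x in Iio t, f x ∂ν = 0) : f =ᵐ[ν] 0 :=
  hf.ae_eq_zero_of_forall_setIntegral_eq_zero fun _ hs _ =>
    setIntegral_eq_zero_of_forall_setIntegral_Iio_eq_zero hf h hs

theorem ae_eq_of_forall_setIntegral_Iio_eq {g : ℝ → E} (hf : Integrable f ν) (hg : Integrable g ν)
    (h : ∀ t, ∫ x in Iio t, f x ∂ν = ∫ x in Iio t, g x ∂ν) : f =ᵐ[ν] g := by
  have hsub : f - g =ᵐ[ν] 0 := ae_eq_zero_of_forall_setIntegral_Iio_eq_zero (hf.sub hg) fun t => by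
    rw [Pi.sub_def, integral_sub hf.integrableOn hg.integrableOn, h t, sub_self]
  filter_upwards [hsub] with x hx
  exact sub_eq_zero.mp hx

end IioIntegrals

theorem stmt16_general
    {E : Type*} [NormedAddCommGroup E] [NormedSpace ℝ E] [CompleteSpace E]
    (g : ℝ → ℝ)
    (μ : Measure ℝ)
    (hμ : ∀ a b : ℝ, a ≤ b → μ (Set.Ico a b) = ENNReal.ofReal (g b - g a))
    (T : ℝ) (hT : 0 ≤ T)
    (q : ℝ≥0∞) (hq : 1 ≤ q)
    (u v : ℝ → E)
    (hu : MemLp u q (μ.restrict (Set.Ico 0 T)))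
    (hv : MemLp v q (μ.restrict (Set.Ico 0 T)))
    (heq : ∀ t ∈ Set.Icc 0 T,
      ∫ s in Set.Ico 0 t, u s ∂μ = ∫ s in Set.Ico 0 t, v s ∂μ) :
    u =ᵐ[μ.restrict (Set.Ico 0 T)] v := by
  have : IsFiniteMeasure (μ.restrict (Ico 0 T)) :=
    ⟨by rw [Measure.restrict_apply_univ, hμ 0 T hT]; exact ofReal_lt_top⟩
  refine ae_eq_of_forall_setIntegral_Iio_eq (hu.integrable hq) (hv.integrable hq) fun t => ?_
  rw [Measure.restrict_restrict measurableSet_Iio, inter_comm, Ico_inter_Iio]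
  rcases le_or_gt 0 (min T t) with h0 | hneg
  · exact heq _ ⟨h0, min_le_left T t⟩
  · simp [Ico_eq_empty_of_le hneg.le]

/-- If two `Lᑫ_g` functions with values in a Banach space have the same indefinite
`μ_g`-integral on `[0,t)` for every `t ∈ [0,T]`, they agree `μ_g`-a.e. on `[0,T]`. -/
theorem stmt16
    {E : Type*} [NormedAddCommGroup E] [NormedSpace ℝ E] [CompleteSpace E]
    (g : ℝ → ℝ) (hg : Monotone g)
    (hlc : ∀ t : ℝ, ContinuousWithinAt g (Set.Iio t) t)
    (μ : Measure ℝ)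
    (hμ : ∀ a b : ℝ, a ≤ b → μ (Set.Ico a b) = ENNReal.ofReal (g b - g a))
    (T : ℝ) (hT : 0 ≤ T)
    (q : ℝ≥0∞) (hq : 1 ≤ q)
    (u v : ℝ → E)
    (hu : MemLp u q (μ.restrict (Set.Ico 0 T)))
    (hv : MemLp v q (μ.restrict (Set.Ico 0 T)))
    (heq : ∀ t ∈ Set.Icc 0 T,
      ∫ s in Set.Ico 0 t, u s ∂μ = ∫ s in Set.Ico 0 t, v s ∂μ) :
    u =ᵐ[μ.restrict (Set.Ico 0 T)] v :=
  stmt16_general g μ hμ T hT q hq u v hu hv heq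
end
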